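/- Let q = 1 + ν^{-η} and u₀ = 1 + ν^{-γ} with ν ≥ 2, η > 0, γ ∈ [0, 1/3], ξ = min(η,γ), and f(u) = √(q² − u^{-2}) − √(1 − u^{-2}). Then there is a universal constant C such that |f''(u₀)| ≤ C ν^{3γ/2 + ξ − η}. -/

import Mathlib

/-!
Write `g c v = √(c - v⁻²)`. Then `g c' = v⁻³ / g c` and `g c'' = -(3 v⁻⁴ / g c + v⁻⁶ / (g c)³)`,
so at `u = 1 + x` the second derivative is `3 u⁻⁴ (1/b - 1/a) + u⁻⁶ (1/b³ - 1/a³)` with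
`a = g q² u ≥ b = g 1 u`. Both differences are at most a constant times `(a² - b²) / (a² b³)`, and
`a² - b² = q² - 1 ≤ 3y`, `a² ≥ max(y, x) / 2`, `b² ≥ x / 2`. For `x = ν^(-γ)`, `y = ν^(-η)` the
resulting bound `y / (x^(3/2) max(y, x))` is exactly `ν^(3γ/2 + min(η, γ) - η)`.
-/

open Real Filter Topology

lemma hasDerivAt_sqrt_sub_inv_sq {c v : ℝ} (hv : v ≠ 0) (hc : 0 < c - v⁻¹ ^ 2) :
    HasDerivAt (fun w => √(c - w⁻¹ ^ 2)) (v⁻¹ ^ 3 / √(c - v⁻¹ ^ 2)) v := by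
  have h := (((hasDerivAt_inv hv).fun_pow 2).const_sub c).sqrt hc.ne'
  refine h.congr_deriv ?_
  norm_num
  field_simp

lemma eventually_ne_zero_and_pos_sub_inv_sq {c v : ℝ} (hv : v ≠ 0) (hc : 0 < c - v⁻¹ ^ 2) :
    ∀ᶠ w in 𝓝 v, w ≠ 0 ∧ 0 < c - w⁻¹ ^ 2 := by
  have hcont : ContinuousAt (fun w : ℝ => c - w⁻¹ ^ 2) v := by fun_prop (disch := exact hv)
  exact (eventually_ne_nhds hv).and (hcont.eventually_const_lt hc)

lemma deriv_sqrt_sub_inv_sq_eventuallyEq {c v : ℝ} (hv : v ≠ 0) (hc : 0 < c - v⁻¹ ^ 2) :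
    deriv (fun w => √(c - w⁻¹ ^ 2)) =ᶠ[𝓝 v] fun w => w⁻¹ ^ 3 / √(c - w⁻¹ ^ 2) :=
  (eventually_ne_zero_and_pos_sub_inv_sq hv hc).mono fun _ hw =>
    (hasDerivAt_sqrt_sub_inv_sq hw.1 hw.2).deriv

lemma hasDerivAt_deriv_sqrt_sub_inv_sq {c v : ℝ} (hv : v ≠ 0) (hc : 0 < c - v⁻¹ ^ 2) :
    HasDerivAt (deriv fun w => √(c - w⁻¹ ^ 2))
      (-(3 * v⁻¹ ^ 4 / √(c - v⁻¹ ^ 2) + v⁻¹ ^ 6 / √(c - v⁻¹ ^ 2) ^ 3)) v := by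
  have hs : 0 < √(c - v⁻¹ ^ 2) := sqrt_pos.2 hc
  have h := ((hasDerivAt_inv hv).fun_pow 3).fun_div (hasDerivAt_sqrt_sub_inv_sq hv hc) hs.ne'
  refine (h.congr_deriv ?_).congr_of_eventuallyEq (deriv_sqrt_sub_inv_sq_eventuallyEq hv hc)
  set s := √(c - v⁻¹ ^ 2)
  norm_num
  field_simp
  ring

lemma deriv_deriv_sqrt_sub_inv_sq_sub {a b v : ℝ} (hv : v ≠ 0) (ha : 0 < a - v⁻¹ ^ 2)
    (hb : 0 < b - v⁻¹ ^ 2) :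
    deriv (deriv fun w => √(a - w⁻¹ ^ 2) - √(b - w⁻¹ ^ 2)) v =
      3 * v⁻¹ ^ 4 * (1 / √(b - v⁻¹ ^ 2) - 1 / √(a - v⁻¹ ^ 2)) +
        v⁻¹ ^ 6 * (1 / √(b - v⁻¹ ^ 2) ^ 3 - 1 / √(a - v⁻¹ ^ 2) ^ 3) := by
  have hderiv : deriv (fun w => √(a - w⁻¹ ^ 2) - √(b - w⁻¹ ^ 2)) =ᶠ[𝓝 v]
      deriv (fun w => √(a - w⁻¹ ^ 2)) - deriv fun w => √(b - w⁻¹ ^ 2) := by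
    filter_upwards [eventually_ne_zero_and_pos_sub_inv_sq hv ha,
      eventually_ne_zero_and_pos_sub_inv_sq hv hb] with w hwa hwb
    exact deriv_sub (hasDerivAt_sqrt_sub_inv_sq hwa.1 hwa.2).differentiableAt
      (hasDerivAt_sqrt_sub_inv_sq hwb.1 hwb.2).differentiableAt
  rw [hderiv.deriv_eq, ((hasDerivAt_deriv_sqrt_sub_inv_sq hv ha).sub
    (hasDerivAt_deriv_sqrt_sub_inv_sq hv hb)).deriv]
  ring

lemma one_div_sub_one_div_le {a b : ℝ} (hb : 0 < b) (hab : b ≤ a) :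
    1 / b - 1 / a ≤ (a ^ 2 - b ^ 2) / (a ^ 2 * b) := by
  have ha : 0 < a := hb.trans_le hab
  rw [div_sub_div _ _ hb.ne' ha.ne', div_le_div_iff₀ (by positivity) (by positivity)]
  nlinarith [mul_nonneg (mul_nonneg ha.le hb.le) (mul_nonneg (sub_nonneg.2 hab) hb.le)]

lemma one_div_pow_three_sub_one_div_pow_three_le {a b : ℝ} (hb : 0 < b) (hab : b ≤ a) :
    1 / b ^ 3 - 1 / a ^ 3 ≤ 3 * (a ^ 2 - b ^ 2) / (a ^ 2 * b ^ 3) := by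
  have ha : 0 < a := hb.trans_le hab
  rw [div_sub_div _ _ (by positivity) (by positivity),
    div_le_div_iff₀ (by positivity) (by positivity)]
  have key : a ^ 3 - b ^ 3 ≤ 3 * a * (a ^ 2 - b ^ 2) := by
    nlinarith [mul_nonneg (sub_nonneg.2 hab) (mul_nonneg ha.le hb.le),
      mul_nonneg (sub_nonneg.2 hab) (sq_nonneg a), mul_nonneg (sub_nonneg.2 hab) (sq_nonneg b)]
  have hpos : 0 ≤ a ^ 2 * b ^ 3 := by positivity
  nlinarith [mul_le_mul_of_nonneg_right key hpos]

lemma abs_three_mul_pow_four_add_pow_six_le {t a b : ℝ} (ht0 : 0 ≤ t) (ht1 : t ≤ 1)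
    (hb : 0 < b) (hb1 : b ≤ 1) (hab : b ≤ a) :
    |3 * t ^ 4 * (1 / b - 1 / a) + t ^ 6 * (1 / b ^ 3 - 1 / a ^ 3)| ≤
      6 * (a ^ 2 - b ^ 2) / (a ^ 2 * b ^ 3) := by
  have ha : 0 < a := hb.trans_le hab
  have h1 : 0 ≤ 1 / b - 1 / a := sub_nonneg.2 (one_div_le_one_div_of_le hb hab)
  have h3 : 0 ≤ 1 / b ^ 3 - 1 / a ^ 3 :=
    sub_nonneg.2 (one_div_le_one_div_of_le (by positivity) (pow_le_pow_left₀ hb.le hab 3))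
  have ht4 : t ^ 4 ≤ 1 := pow_le_one₀ ht0 ht1
  have ht6 : t ^ 6 ≤ 1 := pow_le_one₀ ht0 ht1
  have hbb3 : (a ^ 2 - b ^ 2) / (a ^ 2 * b) ≤ (a ^ 2 - b ^ 2) / (a ^ 2 * b ^ 3) :=
    div_le_div_of_nonneg_left (by nlinarith) (by positivity)
      (mul_le_mul_of_nonneg_left (pow_le_of_le_one hb.le hb1 (by norm_num)) (by positivity))
  rw [abs_of_nonneg (by positivity)]
  calc 3 * t ^ 4 * (1 / b - 1 / a) + t ^ 6 * (1 / b ^ 3 - 1 / a ^ 3)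
      ≤ 3 * (1 / b - 1 / a) + (1 / b ^ 3 - 1 / a ^ 3) := by
        nlinarith [mul_le_of_le_one_left h1 ht4, mul_le_of_le_one_left h3 ht6]
    _ ≤ 3 * ((a ^ 2 - b ^ 2) / (a ^ 2 * b ^ 3)) + 3 * (a ^ 2 - b ^ 2) / (a ^ 2 * b ^ 3) := by
        gcongr
        · exact (one_div_sub_one_div_le hb hab).trans hbb3
        · exact one_div_pow_three_sub_one_div_pow_three_le hb hab
    _ = 6 * (a ^ 2 - b ^ 2) / (a ^ 2 * b ^ 3) := by ring

lemma div_two_le_one_sub_inv_one_add_sq {x : ℝ} (hx0 : 0 ≤ x) (hx1 : x ≤ 1) :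
    x / 2 ≤ 1 - (1 + x)⁻¹ ^ 2 := by
  rw [inv_pow, ← one_div, le_sub_iff_add_le, ← le_sub_iff_add_le', div_le_iff₀ (by positivity)]
  nlinarith [mul_nonneg hx0 (mul_nonneg hx0 hx0)]

lemma mul_sqrt_div_three_le_pow_three {x b : ℝ} (hx : 0 ≤ x) (hb : 0 ≤ b) (h : x / 2 ≤ b ^ 2) :
    x * √x / 3 ≤ b ^ 3 := by
  have hsq : (x * √x / 3) ^ 2 ≤ (b ^ 3) ^ 2 := by
    have : (x * √x / 3) ^ 2 = x ^ 3 / 9 := by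
      rw [div_pow, mul_pow, sq_sqrt hx]; ring
    rw [this, ← pow_mul, show (b ^ (3 * 2) : ℝ) = (b ^ 2) ^ 3 by ring]
    have := pow_le_pow_left₀ (by positivity) h 3
    nlinarith [pow_nonneg hx 3]
  exact (pow_le_pow_iff_left₀ (by positivity) (by positivity) two_ne_zero).1 hsq

lemma abs_deriv_deriv_sqrt_sub_inv_sq_sub_le {x y : ℝ} (hx0 : 0 < x) (hx1 : x ≤ 1) (hy0 : 0 < y)
    (hy1 : y ≤ 1) :
    |deriv (deriv fun v => √((1 + y) ^ 2 - v⁻¹ ^ 2) - √(1 - v⁻¹ ^ 2)) (1 + x)| ≤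
      108 * (y / (x * √x * max y x)) := by
  set t := (1 + x)⁻¹
  have ht0 : 0 < t := by positivity
  have ht1 : t < 1 := inv_lt_one_of_one_lt₀ (by linarith)
  have hB : x / 2 ≤ 1 - t ^ 2 := div_two_le_one_sub_inv_one_add_sq hx0.le hx1
  have hA : 1 - t ^ 2 ≤ (1 + y) ^ 2 - t ^ 2 := by nlinarith
  rw [deriv_deriv_sqrt_sub_inv_sq_sub (by positivity) (by linarith) (by linarith)]
  set a := √((1 + y) ^ 2 - t ^ 2)
  set b := √(1 - t ^ 2)
  have ha2 : a ^ 2 = (1 + y) ^ 2 - t ^ 2 := sq_sqrt (by linarith)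
  have hb2 : b ^ 2 = 1 - t ^ 2 := sq_sqrt (by linarith)
  have hb : 0 < b := sqrt_pos.2 (by linarith)
  have hb1 : b ≤ 1 := sqrt_le_one.2 (by nlinarith)
  have hab : b ≤ a := sqrt_le_sqrt hA
  have hdiff : a ^ 2 - b ^ 2 ≤ 3 * y := by nlinarith
  have hmax : max y x / 2 ≤ a ^ 2 := by
    rw [div_le_iff₀ two_pos, max_le_iff]
    constructor <;> nlinarith
  have hb3 : x * √x / 3 ≤ b ^ 3 := mul_sqrt_div_three_le_pow_three hx0.le hb.le (hb2 ▸ hB)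
  calc _ ≤ 6 * (a ^ 2 - b ^ 2) / (a ^ 2 * b ^ 3) :=
        abs_three_mul_pow_four_add_pow_six_le ht0.le ht1.le hb hb1 hab
    _ ≤ 6 * (3 * y) / (max y x / 2 * (x * √x / 3)) := by gcongr
    _ = 108 * (y / (x * √x * max y x)) := by ring

lemma rpow_neg_div_mul_sqrt_mul_max_eq {ν η γ : ℝ} (hν : 1 ≤ ν) :
    ν ^ (-η) / (ν ^ (-γ) * √(ν ^ (-γ)) * max (ν ^ (-η)) (ν ^ (-γ))) =
      ν ^ (3 * γ / 2 + min η γ - η) := by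
  have hν0 : 0 < ν := zero_lt_one.trans_le hν
  rw [← (monotone_rpow_of_base_ge_one hν).map_max, max_neg_neg, sqrt_eq_rpow,
    ← rpow_mul hν0.le, ← rpow_add hν0, ← rpow_add hν0, ← rpow_sub hν0]
  ring_nf

theorem f_second_deriv_upper_bound :
    ∃ C > 0, ∀ (ν η γ : ℝ), 2 ≤ ν → 0 < η → γ ∈ Set.Icc (0 : ℝ) (1 / 3) →
      |deriv (deriv (fun v : ℝ =>
          Real.sqrt ((1 + ν ^ (-η)) ^ 2 - v⁻¹ ^ 2) - Real.sqrt (1 - v⁻¹ ^ 2)))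
        (1 + ν ^ (-γ))| ≤
      C * ν ^ (3 * γ / 2 + min η γ - η) := by
  refine ⟨108, by norm_num, fun ν η γ hν hη hγ => ?_⟩
  have hν1 : 1 ≤ ν := by linarith
  have hν0 : 0 < ν := by linarith
  rw [← rpow_neg_div_mul_sqrt_mul_max_eq hν1]
  exact abs_deriv_deriv_sqrt_sub_inv_sq_sub_le (rpow_pos_of_pos hν0 _)
    (rpow_le_one_of_one_le_of_nonpos hν1 (by linarith [hγ.1])) (rpow_pos_of_pos hν0 _)
    (rpow_le_one_of_one_le_of_nonpos hν1 (by linarith))
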